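/- (High-probability Fano-type lower bound) Let (Θ, ρ) be a pseudometric space, let (𝒳, 𝒜) be a measurable space, and let (P_θ)_{θ ∈ Θ} be a family of probability measures on (𝒳, 𝒜). Suppose θ₁, …, θ_N ∈ Θ with N ≥ 2 satisfy ρ(θ_i, θ_j) ≥ ε for all i ≠ j, and that the Kullback–Leibler divergence satisfies KL(P_{θ_i} ‖ P_{θ_j}) ≤ D for all i, j. Then for every measurable estimator θ̂ : 𝒳 → Θ, sup_{1 ≤ i ≤ N} P_{θ_i}( ρ(θ̂(X), θ_i) ≥ ε/2 ) ≥ 1 − (D + log 2)/log N. -/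

import Mathlib

open MeasureTheory Classical
open scoped ENNReal

/-- The Kullback–Leibler divergence between two measures, valued in `ℝ≥0∞`:
it is `∫ log(dP/dQ) dP` when `P ≪ Q` and this integral makes sense, and `∞` otherwise. -/
noncomputable def klDiv {X : Type*} [MeasurableSpace X] (P Q : Measure X) : ℝ≥0∞ :=
  if P ≪ Q ∧ Integrable (llr P Q) P then ENNReal.ofReal (∫ x, llr P Q x ∂P) else ⊤

/-! Let `Aᵢ` be the set of observations on which the estimator lies within `ε/2` of `θᵢ`;
by separation the `Aᵢ` are pairwise disjoint. The log-sum inequality on `A` and on `Aᶜ`,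
together with the bound `log 2` on the binary entropy, gives
`-Pᵢ(A) log Pⱼ(A) ≤ KL(Pᵢ ‖ Pⱼ) + log 2`. If every `Pᵢ(Aᵢ)` exceeded `(D + log 2) / log N`,
this would force `Pⱼ(Aᵢ) > 1/N` for all `i, j`, so for a fixed `j` the disjoint sets `Aᵢ`
would carry total `Pⱼ`-mass above `1`. -/

open Real Function

namespace MeasureTheory.Measure

variable {X : Type*} [MeasurableSpace X] {μ ν : Measure X} {s : Set X}

lemma rnDeriv_restrict_restrict [SigmaFinite μ] [SigmaFinite ν] (hμν : μ ≪ ν)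
    (hs : MeasurableSet s) :
    (μ.restrict s).rnDeriv (ν.restrict s) =ᵐ[ν.restrict s] μ.rnDeriv ν := by
  have h : μ.restrict s = (ν.restrict s).withDensity (μ.rnDeriv ν) := by
    rw [← restrict_withDensity hs, withDensity_rnDeriv_eq μ ν hμν]
  rw [h]
  exact rnDeriv_withDensity _ (measurable_rnDeriv μ ν)

end MeasureTheory.Measure

namespace MeasureTheory

variable {X : Type*} [MeasurableSpace X] {μ ν : Measure X} {s : Set X}

lemma llr_restrict_restrict [SigmaFinite μ] [SigmaFinite ν] (hμν : μ ≪ ν)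
    (hs : MeasurableSet s) :
    llr (μ.restrict s) (ν.restrict s) =ᵐ[μ.restrict s] llr μ ν := by
  filter_upwards [(hμν.restrict s).ae_le (Measure.rnDeriv_restrict_restrict hμν hs)] with x hx
  simp only [llr, hx]

lemma mul_log_le_setIntegral_llr [IsFiniteMeasure μ] [IsFiniteMeasure ν] (hμν : μ ≪ ν)
    (h_int : Integrable (llr μ ν) μ) (hs : MeasurableSet s) :
    μ.real s * log (μ.real s / ν.real s) ≤ ∫ x in s, llr μ ν x ∂μ := by
  have hllr := llr_restrict_restrict hμν hs
  have h_int' : Integrable (llr (μ.restrict s) (ν.restrict s)) (μ.restrict s) :=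
    h_int.restrict.congr hllr.symm
  have h := InformationTheory.mul_log_le_toReal_klDiv (hμν.restrict s) h_int'
  rw [InformationTheory.toReal_klDiv (hμν.restrict s) h_int', integral_congr_ae hllr] at h
  simp only [measureReal_restrict_apply_univ] at h
  linarith

lemma Measure.AbsolutelyContinuous.measureReal_eq_zero [IsFiniteMeasure ν] (hμν : μ ≪ ν)
    (hs : ν.real s = 0) : μ.real s = 0 := by
  simp [measureReal_def, hμν ((measureReal_eq_zero_iff (measure_ne_top ν s)).mp hs)]

lemma neg_mul_log_measureReal_le_integral_llr_add_log_two [IsProbabilityMeasure μ]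
    [IsProbabilityMeasure ν] (hμν : μ ≪ ν) (h_int : Integrable (llr μ ν) μ)
    (hs : MeasurableSet s) :
    -(μ.real s * log (ν.real s)) ≤ ∫ x, llr μ ν x ∂μ + log 2 := by
  have log_div_split : ∀ t, μ.real t * log (μ.real t / ν.real t)
      = μ.real t * log (μ.real t) - μ.real t * log (ν.real t) := by
    intro t
    rcases eq_or_ne (μ.real t) 0 with h | h
    · simp [h]
    rw [log_div h (mt hμν.measureReal_eq_zero h), mul_sub]
  have h_in := mul_log_le_setIntegral_llr hμν h_int hs
  have h_out := mul_log_le_setIntegral_llr hμν h_int hs.compl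
  rw [log_div_split] at h_in h_out
  rw [probReal_compl_eq_one_sub hs] at h_out
  have h_total := integral_add_compl hs h_int
  have h_out_nonneg : 0 ≤ -((1 - μ.real s) * log (ν.real sᶜ)) :=
    neg_nonneg.mpr (mul_nonpos_of_nonneg_of_nonpos (sub_nonneg.mpr measureReal_le_one)
      (log_nonpos measureReal_nonneg measureReal_le_one))
  have h_ent := binEntropy_le_log_two (p := μ.real s)
  rw [binEntropy, log_inv, log_inv] at h_ent
  linarith

end MeasureTheory

section

variable {X : Type*} [MeasurableSpace X] {μ ν : Measure X}

lemma klDiv_le_ofReal_iff {D : ℝ} (hD : 0 ≤ D) :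
    klDiv μ ν ≤ ENNReal.ofReal D ↔
      μ ≪ ν ∧ Integrable (llr μ ν) μ ∧ ∫ x, llr μ ν x ∂μ ≤ D := by
  unfold klDiv
  split_ifs with h
  · simp [h, ENNReal.ofReal_le_ofReal_iff hD]
  · simp only [top_le_iff, ENNReal.ofReal_ne_top, false_iff]
    tauto

lemma exp_neg_div_le_measureReal_of_klDiv_le [IsProbabilityMeasure μ] [IsProbabilityMeasure ν]
    {D : ℝ} (hD : 0 ≤ D) (hKL : klDiv μ ν ≤ ENNReal.ofReal D) {s : Set X}
    (hs : MeasurableSet s) (hμs : 0 < μ.real s) :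
    exp (-(D + log 2) / μ.real s) ≤ ν.real s := by
  obtain ⟨hμν, h_int, h_le⟩ := (klDiv_le_ofReal_iff hD).mp hKL
  have hνs : 0 < ν.real s := measureReal_nonneg.lt_of_ne' (mt hμν.measureReal_eq_zero hμs.ne')
  have h_bound := neg_mul_log_measureReal_le_integral_llr_add_log_two hμν h_int hs
  rw [← exp_log hνs, exp_le_exp, div_le_iff₀ hμs]
  linarith

theorem exists_measureReal_le_of_pairwise_disjoint_of_klDiv_le {ι : Type*} [Fintype ι]
    (hι : 1 < Fintype.card ι) (μ : ι → Measure X) [∀ i, IsProbabilityMeasure (μ i)]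
    {A : ι → Set X} (hA : ∀ i, MeasurableSet (A i)) (hdisj : Pairwise (Disjoint on A))
    {D : ℝ} (hD : 0 ≤ D) (hKL : ∀ i j, klDiv (μ i) (μ j) ≤ ENNReal.ofReal D) :
    ∃ i, (μ i).real (A i) ≤ (D + log 2) / log (Fintype.card ι) := by
  by_contra! h_large
  set N := Fintype.card ι
  have hN : (0 : ℝ) < N := by positivity
  have h_logN : 0 < log N := log_pos (by exact_mod_cast hι)
  have h_num : 0 < D + log 2 := by positivity
  have h_mass : ∀ i j, (N : ℝ)⁻¹ < (μ j).real (A i) := by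
    intro i j
    have h_pos : 0 < (μ i).real (A i) := (div_pos h_num h_logN).trans (h_large i)
    calc (N : ℝ)⁻¹ = exp (-log N) := by rw [exp_neg, exp_log hN]
      _ < exp (-(D + log 2) / (μ i).real (A i)) := by
        rw [exp_lt_exp, neg_div, neg_lt_neg_iff, div_lt_iff₀ h_pos, ← div_lt_iff₀' h_logN]
        exact h_large i
      _ ≤ (μ j).real (A i) := exp_neg_div_le_measureReal_of_klDiv_le hD (hKL i j) (hA i) h_pos
  obtain ⟨j⟩ : Nonempty ι := Fintype.card_pos_iff.mp (by omega)
  have h_sum_le : ∑ i, (μ j).real (A i) ≤ 1 :=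
    measureReal_iUnion_fintype (μ := μ j) hdisj hA ▸ measureReal_le_one
  have h_sum_gt : ∑ _i : ι, (N : ℝ)⁻¹ < ∑ i, (μ j).real (A i) :=
    Finset.sum_lt_sum_of_nonempty ⟨j, Finset.mem_univ j⟩ fun i _ ↦ h_mass i j
  rw [Finset.sum_const, Finset.card_univ, nsmul_eq_mul, mul_inv_cancel₀ hN.ne'] at h_sum_gt
  linarith

end

theorem fano_high_probability_lower_bound_general
    {Θ 𝒳 : Type*} [PseudoMetricSpace Θ] [MeasurableSpace Θ] [OpensMeasurableSpace Θ]
    [MeasurableSpace 𝒳] (P : Θ → Measure 𝒳)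
    (N : ℕ) (hN : 2 ≤ N) (θ : Fin N → Θ)
    (hP : ∀ i, IsProbabilityMeasure (P (θ i)))
    (ε D : ℝ) (hD : 0 ≤ D)
    (hsep : ∀ i j, i ≠ j → ε ≤ dist (θ i) (θ j))
    (hKL : ∀ i j, klDiv (P (θ i)) (P (θ j)) ≤ ENNReal.ofReal D)
    (est : 𝒳 → Θ) (hest : Measurable est) :
    ∃ i : Fin N,
      ENNReal.ofReal (1 - (D + Real.log 2) / Real.log N)
        ≤ P (θ i) {x | ε / 2 ≤ dist (est x) (θ i)} := by
  set A : Fin N → Set 𝒳 := fun i ↦ est ⁻¹' Metric.ball (θ i) (ε / 2)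
  have hA : ∀ i, MeasurableSet (A i) := fun i ↦ hest measurableSet_ball
  have hdisj : Pairwise (Disjoint on A) := fun i j hij ↦
    (Metric.ball_disjoint_ball (by rw [add_halves]; exact hsep i j hij)).preimage est
  obtain ⟨i, hi⟩ := exists_measureReal_le_of_pairwise_disjoint_of_klDiv_le
    (by rw [Fintype.card_fin]; omega) (fun i ↦ P (θ i)) hA hdisj hD hKL
  refine ⟨i, ?_⟩
  have h_compl : {x | ε / 2 ≤ dist (est x) (θ i)} = (A i)ᶜ := by
    ext x
    simp [A, not_lt]
  rw [h_compl, ← ofReal_measureReal, probReal_compl_eq_one_sub (hA i)]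
  simp only [Fintype.card_fin] at hi
  exact ENNReal.ofReal_le_ofReal (by linarith)

/-- High-probability Fano-type lower bound: if `θ₁, …, θ_N` are
`ε`-separated in the pseudometric `ρ = dist` and all pairwise KL divergences are at
most `D`, then any measurable estimator errs by at least `ε/2` with probability at
least `1 − (D + log 2)/log N` for some `θᵢ`. -/
theorem fano_high_probability_lower_bound
    {Θ 𝒳 : Type*} [PseudoMetricSpace Θ] [MeasurableSpace Θ] [OpensMeasurableSpace Θ]
    [MeasurableSpace 𝒳] (P : Θ → Measure 𝒳)
    (N : ℕ) (hN : 2 ≤ N) (θ : Fin N → Θ)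
    (hP : ∀ i, IsProbabilityMeasure (P (θ i)))
    (ε D : ℝ) (hε : 0 ≤ ε) (hD : 0 ≤ D)
    (hsep : ∀ i j, i ≠ j → ε ≤ dist (θ i) (θ j))
    (hKL : ∀ i j, klDiv (P (θ i)) (P (θ j)) ≤ ENNReal.ofReal D)
    (est : 𝒳 → Θ) (hest : Measurable est) :
    ∃ i : Fin N,
      ENNReal.ofReal (1 - (D + Real.log 2) / Real.log N)
        ≤ P (θ i) {x | ε / 2 ≤ dist (est x) (θ i)} :=
  fano_high_probability_lower_bound_general P N hN θ hP ε D hD hsep hKL est hest
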